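/- Let ξ ∈ ℚ[[x]] be the unique formal power series with zero constant term satisfying x·ξ(x) − x³ − ξ(x)³ = 0, and let G(x) = x³ ∑_{i≥0} Q_{i,0} x^i ∈ ℚ[[x]], where Q_{i,0} is the number of knight walks ending at (i,0). Then G(x) + G(ξ(x)) = x² ξ(x)² as an identity of formal power series in ℚ[[x]] (the composition G(ξ(x)) is well defined since ξ has zero constant term). -/

import Mathlib

/-!
Classifying walks by their last step gives
`Q(a, b) = [a = b = 1] + Q(a + 1, b - 2) + Q(a - 2, b + 1)` for `a, b ≥ 0`, with `Q` extended by `0`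
off the quadrant. For the generating function
`F(x, y) = ∑ Q(i, j) xⁱ yʲ` this is the kernel equation `(xy - x³ - y³) F = x²y² - G(x) - G(y)`,
where the boundary terms are `G(x) = x³ F(x, 0)` and, by the symmetry `Q(i, j) = Q(j, i)`,
`G(y) = y³ F(0, y)`. Substituting `y = ξ(x)` kills the kernel.
-/

/-- `w : Fin (n+1) → ℤ × ℤ` is a knight walk of length `n`: it starts at `(1,1)`, takes its
steps in `{(-1,2), (2,-1)}` and all its vertices have nonnegative coordinates. -/
def IsKnightWalk (n : ℕ) (w : Fin (n + 1) → ℤ × ℤ) : Prop :=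
  w 0 = (1, 1) ∧
  (∀ k : Fin n, w k.succ - w k.castSucc ∈ ({(-1, 2), (2, -1)} : Set (ℤ × ℤ))) ∧
  ∀ k, 0 ≤ (w k).1 ∧ 0 ≤ (w k).2

/-- `Q i j` is the number of knight walks (of any length) ending at `(i, j)`. -/
noncomputable def Q (i j : ℕ) : ℕ :=
  Nat.card {p : Σ n : ℕ, Fin (n + 1) → ℤ × ℤ //
    IsKnightWalk p.1 p.2 ∧ p.2 (Fin.last p.1) = ((i : ℤ), (j : ℤ))}

/-- `G(x) = x³ ∑_{i ≥ 0} Q_{i,0} xⁱ`, the generating function of knight walks ending on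
the `x`-axis. -/
noncomputable def G : PowerSeries ℚ :=
  PowerSeries.mk fun n => if 3 ≤ n then (Q (n - 3) 0 : ℚ) else 0

/-- Composition `F(f)` of formal power series; this is the usual composition whenever `f`
has zero constant term, since then the coefficient of `xᴺ` in `F(f)` only involves
`f^k` for `k ≤ N`. -/
noncomputable def composePS (F f : PowerSeries ℚ) : PowerSeries ℚ :=
  PowerSeries.mk fun N => PowerSeries.coeff N
    (∑ k ∈ Finset.range (N + 1), PowerSeries.C (PowerSeries.coeff k F) * f ^ k)

namespace IsKnightWalk

variable {n : ℕ} {w : Fin (n + 1) → ℤ × ℤ}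

theorem fst_add_snd (hw : IsKnightWalk n w) (k : Fin (n + 1)) :
    (w k).1 + (w k).2 = k + 2 := by
  induction k using Fin.induction with
  | zero => simp [hw.1]
  | succ k ih =>
    have hstep := hw.2.1 k
    simp only [Set.mem_insert_iff, Set.mem_singleton_iff, Prod.ext_iff, Prod.fst_sub,
      Prod.snd_sub, Fin.val_castSucc] at hstep ih
    simp only [Fin.val_succ]
    push_cast
    omega

theorem swap_comp_iff : IsKnightWalk n (Prod.swap ∘ w) ↔ IsKnightWalk n w := by
  simp only [IsKnightWalk, Function.comp_apply, Set.mem_insert_iff, Set.mem_singleton_iff,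
    Prod.ext_iff, Prod.fst_sub, Prod.snd_sub, Prod.fst_swap, Prod.snd_swap]
  constructor <;> rintro ⟨h0, hs, hnn⟩ <;>
    exact ⟨h0.symm, fun k => (hs k).symm.imp And.symm And.symm, fun k => (hnn k).symm⟩

end IsKnightWalk

theorem isKnightWalk_snoc_iff {n : ℕ} {v : Fin (n + 1) → ℤ × ℤ} {x : ℤ × ℤ} :
    IsKnightWalk (n + 1) (Fin.snoc v x : Fin (n + 2) → ℤ × ℤ) ↔
      IsKnightWalk n v ∧ x - v (Fin.last n) ∈ ({(-1, 2), (2, -1)} : Set (ℤ × ℤ)) ∧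
        0 ≤ x.1 ∧ 0 ≤ x.2 := by
  simp only [IsKnightWalk, Fin.forall_fin_succ' (n := n), Fin.forall_fin_succ' (n := n + 1),
    Fin.succ_castSucc, Fin.succ_last, Fin.snoc_castSucc, Fin.snoc_last]
  rw [show (0 : Fin (n + 2)) = Fin.castSucc 0 from rfl, Fin.snoc_castSucc]
  tauto

def walksTo (n : ℕ) (e : ℤ × ℤ) : Set (Fin (n + 1) → ℤ × ℤ) :=
  {w | IsKnightWalk n w ∧ w (Fin.last n) = e}

theorem finite_walksTo (n : ℕ) (e : ℤ × ℤ) : (walksTo n e).Finite := by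
  refine (Set.Finite.pi fun _ => Set.finite_Icc (0 : ℤ × ℤ) (n + 2, n + 2)).subset ?_
  rintro w ⟨hw, -⟩
  simp only [Set.mem_pi, Set.mem_univ, Set.mem_Icc, Prod.le_def, true_implies]
  intro k
  have := hw.fst_add_snd k
  have := hw.2.2 k
  simp only [Prod.fst_zero, Prod.snd_zero]
  omega

theorem ncard_walksTo_zero (e : ℤ × ℤ) :
    (walksTo 0 e).ncard = if e = (1, 1) then 1 else 0 := by
  split_ifs with h
  · subst h
    refine Set.ncard_eq_one.2 ⟨fun _ => (1, 1), Set.eq_singleton_iff_unique_mem.2 ⟨?_, ?_⟩⟩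
    · exact ⟨⟨rfl, Fin.elim0, fun _ => by simp⟩, rfl⟩
    · exact fun w ⟨hw, _⟩ => funext fun k => by rw [Fin.fin_one_eq_zero k, hw.1]
  · rw [Set.ncard_eq_zero (finite_walksTo 0 e)]
    exact Set.eq_empty_of_forall_notMem fun w ⟨hw, hend⟩ => h (hend.symm.trans hw.1)

theorem walksTo_succ {n : ℕ} {e : ℤ × ℤ} (he : 0 ≤ e.1 ∧ 0 ≤ e.2) :
    walksTo (n + 1) e = (fun v => Fin.snoc v e) ''
      (walksTo n (e - (-1, 2)) ∪ walksTo n (e - (2, -1))) := by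
  ext w
  constructor
  · rintro ⟨hw, hend⟩
    rw [← Fin.snoc_init_self w, hend, isKnightWalk_snoc_iff] at hw
    obtain ⟨hv, hs, -⟩ := hw
    refine ⟨Fin.init w, ?_, by rw [← hend]; exact Fin.snoc_init_self w⟩
    rcases hs with hs | hs
    · exact Or.inl ⟨hv, by rw [← hs, sub_sub_cancel]⟩
    · exact Or.inr ⟨hv, by rw [← hs, sub_sub_cancel]⟩
  · rintro ⟨v, ⟨hv, hend⟩ | ⟨hv, hend⟩, rfl⟩ <;>
      refine ⟨isKnightWalk_snoc_iff.2 ⟨hv, ?_, he⟩, Fin.snoc_last _ _⟩ <;>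
      simp [hend]

theorem ncard_walksTo_succ {n : ℕ} {e : ℤ × ℤ} (he : 0 ≤ e.1 ∧ 0 ≤ e.2) :
    (walksTo (n + 1) e).ncard =
      (walksTo n (e - (-1, 2))).ncard + (walksTo n (e - (2, -1))).ncard := by
  have hinj : Function.Injective fun v : Fin (n + 1) → ℤ × ℤ => (Fin.snoc v e : Fin (n + 2) → _) :=
    fun v v' h => by simpa using congrArg Fin.init h
  have hdisj : Disjoint (walksTo n (e - (-1, 2))) (walksTo n (e - (2, -1))) :=
    Set.disjoint_left.2 fun v ⟨_, h1⟩ ⟨_, h2⟩ => by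
      have := sub_right_inj.1 (h1.symm.trans h2)
      simp [Prod.ext_iff] at this
  rw [walksTo_succ he, Set.ncard_image_of_injective _ hinj,
    Set.ncard_union_eq hdisj (finite_walksTo _ _) (finite_walksTo _ _)]

theorem walksTo_swap (n : ℕ) (e : ℤ × ℤ) :
    walksTo n e.swap = (Prod.swap ∘ ·) ⁻¹' walksTo n e := by
  ext w
  simp [walksTo, IsKnightWalk.swap_comp_iff, Prod.swap_eq_iff_eq_swap]

noncomputable def walkCount (e : ℤ × ℤ) : ℕ :=
  Nat.card {p : Σ n : ℕ, Fin (n + 1) → ℤ × ℤ //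
    IsKnightWalk p.1 p.2 ∧ p.2 (Fin.last p.1) = e}

theorem Q_eq_walkCount (i j : ℕ) : Q i j = walkCount (i, j) := rfl

theorem walkCount_eq_ncard {n : ℕ} {e : ℤ × ℤ} (h : e.1 + e.2 = n + 2) :
    walkCount e = (walksTo n e).ncard := by
  rw [walkCount, ← Nat.card_coe_set_eq]
  refine (Nat.card_congr (Equiv.ofBijective (fun v => ⟨⟨n, v.1⟩, v.2⟩) ⟨?_, ?_⟩)).symm
  · intro v v' hvv'
    exact Subtype.ext (eq_of_heq (Sigma.mk.inj_iff.1 (congrArg Subtype.val hvv')).2)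
  · rintro ⟨⟨m, w⟩, hw, hend⟩
    have := hw.fst_add_snd (Fin.last m)
    rw [hend] at this
    obtain rfl : m = n := by simp at this; omega
    exact ⟨⟨w, hw, hend⟩, rfl⟩

theorem walkCount_eq_zero_of_lt {e : ℤ × ℤ} (h : e.1 + e.2 < 2) : walkCount e = 0 := by
  refine @Nat.card_of_isEmpty _ ⟨fun ⟨⟨m, w⟩, hw, hend⟩ => ?_⟩
  have := hw.fst_add_snd (Fin.last m)
  rw [hend] at this
  simp at this
  omega

theorem walkCount_eq_zero_of_neg {e : ℤ × ℤ} (h : e.1 < 0 ∨ e.2 < 0) : walkCount e = 0 := by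
  refine @Nat.card_of_isEmpty _ ⟨fun ⟨⟨m, w⟩, hw, hend⟩ => ?_⟩
  have := hw.2.2 (Fin.last m)
  rw [hend] at this
  omega

theorem walkCount_rec {a b : ℤ} (ha : 0 ≤ a) (hb : 0 ≤ b) :
    walkCount (a, b) = (if a = 1 ∧ b = 1 then 1 else 0) +
      walkCount (a + 1, b - 2) + walkCount (a - 2, b + 1) := by
  rcases lt_trichotomy (a + b) 2 with h | h | h
  · rw [if_neg (by omega), walkCount_eq_zero_of_lt h, walkCount_eq_zero_of_lt,
      walkCount_eq_zero_of_lt] <;> simp <;> omega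
  · rw [walkCount_eq_ncard (n := 0) (by simpa using h), ncard_walksTo_zero,
      walkCount_eq_zero_of_lt, walkCount_eq_zero_of_lt] <;> simp <;> omega
  · obtain ⟨n, hn⟩ : ∃ n : ℕ, a + b = n + 1 + 2 := ⟨(a + b - 3).toNat, by omega⟩
    rw [walkCount_eq_ncard hn, ncard_walksTo_succ ⟨ha, hb⟩, if_neg (by omega), zero_add,
      walkCount_eq_ncard (n := n) (by simp; omega), walkCount_eq_ncard (n := n) (by simp; omega)]
    simp only [Prod.mk_sub_mk, sub_neg_eq_add]

theorem walkCount_swap (e : ℤ × ℤ) : walkCount e.swap = walkCount e := by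
  obtain h | ⟨n, h⟩ : e.1 + e.2 < 2 ∨ ∃ n : ℕ, e.1 + e.2 = n + 2 :=
    (lt_or_ge _ _).imp_right fun h => ⟨(e.1 + e.2 - 2).toNat, by omega⟩
  · rw [walkCount_eq_zero_of_lt h, walkCount_eq_zero_of_lt (by simpa [add_comm] using h)]
  · rw [walkCount_eq_ncard h, walkCount_eq_ncard (n := n) (by simpa [add_comm] using h),
      walksTo_swap, Set.ncard_preimage_of_injective_subset_range Prod.swap_injective.comp_left]
    rw [((Prod.swap_surjective (α := ℤ) (β := ℤ)).comp_left (α := Fin (n + 1))).range_eq]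
    exact Set.subset_univ _

open Finset PowerSeries
open scoped PowerSeries.WithPiTopology

namespace PowerSeries

variable {R : Type*} [CommRing R] {ξ : R⟦X⟧}

theorem coeff_mul_pow_eq_zero_of_lt (hξ : constantCoeff ξ = 0) (f : R⟦X⟧) {n k : ℕ}
    (h : n < k) : coeff n (f * ξ ^ k) = 0 := by
  obtain ⟨g, rfl⟩ := X_dvd_iff.mpr hξ
  rw [mul_pow, mul_left_comm, coeff_X_pow_mul', if_neg (by omega)]

/-- `evalAt ξ Φ` is `Φ(x, ξ(x))` for `Φ ∈ R⟦x⟧⟦y⟧`. The sum defining the coefficient of `xⁿ` is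
cut off at `k ≤ n`, which only gives the right value when `ξ` has no constant term. -/
noncomputable def evalAt (ξ : R⟦X⟧) (Φ : R⟦X⟧⟦X⟧) : R⟦X⟧ :=
  mk fun n => coeff n (∑ k ∈ range (n + 1), coeff k Φ * ξ ^ k)

theorem hasSum_evalAt [TopologicalSpace R] (hξ : constantCoeff ξ = 0) (Φ : R⟦X⟧⟦X⟧) :
    HasSum (fun k => coeff k Φ * ξ ^ k) (evalAt ξ Φ) := by
  rw [WithPiTopology.hasSum_iff_hasSum_coeff]
  intro n
  rw [evalAt, coeff_mk, map_sum]
  exact hasSum_sum_of_ne_finset_zero fun k hk =>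
    coeff_mul_pow_eq_zero_of_lt hξ _ (by simpa using hk)

theorem evalAt_sub (Φ Ψ : R⟦X⟧⟦X⟧) : evalAt ξ (Φ - Ψ) = evalAt ξ Φ - evalAt ξ Ψ := by
  ext n
  simp [evalAt, sub_mul]

theorem evalAt_C (a : R⟦X⟧) : evalAt ξ (C a) = a := by
  ext n
  simp [evalAt, coeff_C]

theorem evalAt_C_mul (hξ : constantCoeff ξ = 0) (a : R⟦X⟧) (Φ : R⟦X⟧⟦X⟧) :
    evalAt ξ (C a * Φ) = a * evalAt ξ Φ := by
  -- `evalAt ξ Φ` is the sum of its series for any topology on `R`; the discrete one makes the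
  -- limit unique and multiplication continuous.
  let : TopologicalSpace R := ⊥
  have : DiscreteTopology R := ⟨rfl⟩
  refine (hasSum_evalAt hξ _).unique ?_
  simpa only [coeff_C_mul, mul_assoc] using (hasSum_evalAt hξ Φ).mul_left a

theorem evalAt_X_pow_mul (hξ : constantCoeff ξ = 0) (m : ℕ) (Φ : R⟦X⟧⟦X⟧) :
    evalAt ξ (X ^ m * Φ) = ξ ^ m * evalAt ξ Φ := by
  let : TopologicalSpace R := ⊥
  have : DiscreteTopology R := ⟨rfl⟩
  refine (hasSum_evalAt hξ _).unique (((add_left_injective m).hasSum_iff fun k hk => ?_).mp ?_)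
  · rw [coeff_X_pow_mul', if_neg, zero_mul]
    rintro hmk
    exact hk ⟨k - m, Nat.sub_add_cancel hmk⟩
  · have hshift : (fun k => coeff k (X ^ m * Φ) * ξ ^ k) ∘ (· + m)
        = fun k => ξ ^ m * (coeff k Φ * ξ ^ k) := by
      funext k
      rw [Function.comp_apply, coeff_X_pow_mul, pow_add]
      ring
    rw [hshift]
    exact (hasSum_evalAt hξ Φ).mul_left (ξ ^ m)

theorem evalAt_X_mul (hξ : constantCoeff ξ = 0) (Φ : R⟦X⟧⟦X⟧) :
    evalAt ξ (X * Φ) = ξ * evalAt ξ Φ := by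
  simpa using evalAt_X_pow_mul hξ 1 Φ

end PowerSeries

theorem composePS_eq_evalAt (F ξ : ℚ⟦X⟧) : composePS F ξ = evalAt ξ (map C F) := by
  ext n
  simp [composePS, evalAt, coeff_map]

/-- `F(x, y) = ∑ Q i j xⁱ yʲ`, with `y` the outer variable. -/
noncomputable def knightGF : ℚ⟦X⟧⟦X⟧ := mk fun j => mk fun i => (Q i j : ℚ)

theorem coeff_G (i : ℕ) : coeff i G = (walkCount ((i : ℤ) - 3, 0) : ℚ) := by
  rw [G, coeff_mk]
  split_ifs with h
  · rw [Q_eq_walkCount, Nat.cast_sub h]; rfl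
  · rw [walkCount_eq_zero_of_neg (by simp; omega), Nat.cast_zero]

theorem coeff_coeff_X_pow_mul_C_X_pow_mul_knightGF (a b i j : ℕ) :
    coeff i (coeff j ((X : ℚ⟦X⟧⟦X⟧) ^ b * (C (X ^ a) * knightGF))) =
      (walkCount ((i : ℤ) - a, (j : ℤ) - b) : ℚ) := by
  rw [coeff_X_pow_mul']
  split_ifs with hb
  · rw [coeff_C_mul, coeff_X_pow_mul', knightGF, coeff_mk]
    split_ifs with ha
    · rw [coeff_mk, Q_eq_walkCount, Nat.cast_sub ha, Nat.cast_sub hb]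
    · rw [walkCount_eq_zero_of_neg (by simp; omega), Nat.cast_zero]
  · rw [map_zero, walkCount_eq_zero_of_neg (by simp; omega), Nat.cast_zero]

/-- `(xy - x³ - y³) F(x, y) = x²y² - G(x) - G(y)`. -/
theorem kernel_equation :
    X * (C X * knightGF) - C (X ^ 3) * knightGF - X ^ 3 * knightGF
      = X ^ 2 * C (X ^ 2) - C G - map C G := by
  have h1 := coeff_coeff_X_pow_mul_C_X_pow_mul_knightGF 1 1
  have h2 := coeff_coeff_X_pow_mul_C_X_pow_mul_knightGF 3 0
  have h3 := coeff_coeff_X_pow_mul_C_X_pow_mul_knightGF 0 3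
  simp only [pow_one, pow_zero, map_one, one_mul] at h1 h2 h3
  refine ext fun j => ext fun i => ?_
  rw [map_sub, map_sub, map_sub, map_sub, h1, h2, h3]
  simp only [map_sub, coeff_X_pow_mul', coeff_C, coeff_map, coeff_G, apply_ite (coeff i),
    coeff_X_pow, map_zero]
  rcases i with _ | i <;> rcases j with _ | j <;> push_cast
  · simp [walkCount_eq_zero_of_neg]
  · rw [← walkCount_swap ((j : ℤ) + 1 - 3, 0)]
    simp [walkCount_eq_zero_of_neg]
  · simp [walkCount_eq_zero_of_neg]
  · simp only [add_sub_cancel_right, sub_zero]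
    rw [walkCount_rec (Nat.cast_nonneg i) (Nat.cast_nonneg j),
      show (i : ℤ) + 1 - 3 = i - 2 by ring, show (j : ℤ) + 1 - 3 = j - 2 by ring]
    push_cast [Nat.cast_eq_one]
    split_ifs <;> first | (exfalso; omega) | ring

/-- If `ξ` is the (unique) formal power series with zero constant term satisfying
`xξ − x³ − ξ³ = 0`, then `G(x) + G(ξ(x)) = x² ξ(x)²` in `ℚ[[x]]`. -/
theorem knight_kernel_equation (ξ : PowerSeries ℚ)
    (h0 : PowerSeries.constantCoeff ξ = 0)
    (hroot : PowerSeries.X * ξ - PowerSeries.X ^ 3 - ξ ^ 3 = 0) :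
    G + composePS G ξ = PowerSeries.X ^ 2 * ξ ^ 2 := by
  have hkernel := congrArg (evalAt ξ) kernel_equation
  simp only [evalAt_sub, evalAt_X_mul h0, evalAt_C_mul h0, evalAt_X_pow_mul h0, evalAt_C]
    at hkernel
  rw [← composePS_eq_evalAt] at hkernel
  linear_combination hkernel - evalAt ξ knightGF * hroot
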